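/- arXiv:math/9812161 — 2 statements merged into one kernel-verified Lean document; each statement's English description precedes it below -/
import Mathlib

section
/- Let ℓ be a positive integer, τ ∈ ℂ with Im τ > 0, and η ∈ ℂ with θ1(2nη) ≠ 0 for all integers 1 ≤ n ≤ 2ℓ. Then for every integer 0 ≤ s ≤ ℓ and every E ∈ ℂ, A_{(ℓ−s)η}(E) = ([ℓ over s]/[2ℓ over s]) · det( E δ_{ij} + (θ1(−2iη)/θ1(2(ℓ+1−i)η)) δ_{i,j−1} + (θ1(2(2ℓ+2−i)η)/θ1(2(ℓ+1−i)η)) δ_{i,j+1} )_{1≤i,j≤s}, where the empty (0×0) determinant equals 1. -/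
open Complex Finset

/-- Jacobi theta function θ₁(x|τ). -/
noncomputable def theta1 (τ x : ℂ) : ℂ :=
  ∑' k : ℤ, Complex.exp ((Real.pi : ℂ) * Complex.I * τ * ((k : ℂ) + 1/2)^2 +
    2 * (Real.pi : ℂ) * Complex.I * (x + 1/2) * ((k : ℂ) + 1/2))

/-- Elliptic number [n] = θ₁(2nη). -/
noncomputable def en (τ η : ℂ) (n : ℤ) : ℂ := theta1 τ (2 * (n : ℂ) * η)

/-- Elliptic factorial [n]! = ∏_{j=1}^n [j]. -/
noncomputable def efact (τ η : ℂ) (n : ℕ) : ℂ := ∏ j ∈ Finset.range n, en τ η ((j : ℤ) + 1)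

/-- Elliptic binomial coefficient [n over m]. -/
noncomputable def ebinom (τ η : ℂ) (n m : ℕ) : ℂ :=
  efact τ η n / (efact τ η m * efact τ η (n - m))

/-- Φ(x,ζ) = θ₁(ζ+x)/(θ₁(x)θ₁(ζ)). -/
noncomputable def Phi (τ x ζ : ℂ) : ℂ := theta1 τ (ζ + x) / (theta1 τ x * theta1 τ ζ)

/-- The polynomials A_{(ℓ−s)η}(E), indexed by s = 0, 1, …, ℓ;
`Apoly τ η ℓ E s = A_{(ℓ−s)η}(E)`. -/
noncomputable def Apoly (τ η : ℂ) (ℓ : ℕ) (E : ℂ) : ℕ → ℂ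
  | 0 => 1
  | 1 => en τ η (ℓ : ℤ) / en τ η (2 * (ℓ : ℤ)) * E
  | (s + 2) =>
      en τ η ((ℓ : ℤ) - (s + 1)) / en τ η (2 * (ℓ : ℤ) - (s + 1)) * E *
        Apoly τ η ℓ E (s + 1)
      + en τ η ((s : ℤ) + 1) / en τ η (2 * (ℓ : ℤ) - (s + 1)) * Apoly τ η ℓ E s

/-- The coefficient A_k(x,λ) of the commuting difference operator A_λ. -/
noncomputable def Acoef (τ η : ℂ) (ℓ : ℕ) (k : ℕ) (x lam : ℂ) : ℂ :=
  (-1 : ℂ)^k * (efact τ η ℓ / efact τ η (2*ℓ)) * ebinom τ η ℓ k *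
  (∏ j ∈ Finset.range (ℓ - k),
     theta1 τ (2*x + 2*((ℓ : ℂ) - (j : ℂ))*η) * theta1 τ (2*lam + 2*((ℓ : ℂ) - (j : ℂ))*η) /
       theta1 τ (2*x + 2*lam + 2*((k : ℂ) - (j : ℂ))*η)) *
  (∏ j ∈ Finset.range k,
     theta1 τ (2*x - 2*((ℓ : ℂ) - (j : ℂ))*η) * theta1 τ (2*lam - 2*((ℓ : ℂ) - (j : ℂ))*η) /
       theta1 τ (2*x + 2*lam + 2*((k : ℂ) + (j : ℂ) - (ℓ : ℂ))*η))

/-- The difference operator A_λ acting on functions: (A_λ f)(x) = Σ_k A_k(x,λ) f(x+(2k−ℓ)η+λ). -/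
noncomputable def Aop (τ η : ℂ) (ℓ : ℕ) (lam : ℂ) (f : ℂ → ℂ) (x : ℂ) : ℂ :=
  ∑ k ∈ Finset.range (ℓ + 1), Acoef τ η ℓ k x lam * f (x + (2*(k : ℂ) - (ℓ : ℂ))*η + lam)

/-- All theta-denominators occurring in the coefficients A_k(x,λ) are nonzero. -/
def domAcoef (τ η : ℂ) (ℓ : ℕ) (x lam : ℂ) : Prop :=
  ∀ k ∈ Finset.range (ℓ + 1),
    (∀ j ∈ Finset.range (ℓ - k), theta1 τ (2*x + 2*lam + 2*((k : ℂ) - (j : ℂ))*η) ≠ 0) ∧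
    (∀ j ∈ Finset.range k, theta1 τ (2*x + 2*lam + 2*((k : ℂ) + (j : ℂ) - (ℓ : ℂ))*η) ≠ 0)

/-- The space Θ⁺_{4ℓ} of even theta functions of order 4ℓ. -/
def ThetaPlus (τ : ℂ) (ℓ : ℕ) (F : ℂ → ℂ) : Prop :=
  Differentiable ℂ F ∧
  (∀ x, F (x + 1) = F x) ∧
  (∀ x, F (x + τ) = Complex.exp (-4*(Real.pi : ℂ)*Complex.I*(ℓ : ℂ)*τ
      - 8*(Real.pi : ℂ)*Complex.I*(ℓ : ℂ)*x) * F x) ∧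
  (∀ x, F (-x) = F x)

/-!
Expanding a tridiagonal determinant along its last row gives the continuant recurrence
`D (s + 2) = a (s + 1) D (s + 1) - c (s + 1) b s D s`. With superdiagonal `-[s+1]/[ℓ-s]` (θ₁ is odd)
and subdiagonal `[2ℓ+1-s]/[ℓ-s]`, rescaling `D s` by `∏_{j<s} [ℓ-j]/[2ℓ-j]`, which is
`[ℓ over s]/[2ℓ over s]`, turns this recurrence into the one defining `A_{(ℓ-s)η}`.
-/

namespace Matrix

variable {R : Type*} [CommRing R]

theorem det_succ_of_col_last_eq_zero {n : ℕ} (A : Matrix (Fin (n + 1)) (Fin (n + 1)) R)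
    (h : ∀ i : Fin n, A i.castSucc (Fin.last n) = 0) :
    A.det = A (Fin.last n) (Fin.last n) * (A.submatrix Fin.castSucc Fin.castSucc).det := by
  rw [det_succ_column A (Fin.last n), Fin.sum_univ_castSucc]
  simp [h]

theorem det_succ_succ_of_row_last_eq_zero {n : ℕ} (A : Matrix (Fin (n + 2)) (Fin (n + 2)) R)
    (h : ∀ j : Fin n, A (Fin.last (n + 1)) j.castSucc.castSucc = 0) :
    A.det = A (Fin.last _) (Fin.last _) * (A.submatrix Fin.castSucc Fin.castSucc).det
      - A (Fin.last _) (Fin.last n).castSucc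
        * (A.submatrix Fin.castSucc (Fin.last n).castSucc.succAbove).det := by
  rw [det_succ_row A (Fin.last _), Fin.sum_univ_castSucc, Fin.sum_univ_castSucc]
  have hodd : Odd (n + 1 + n) := ⟨n, by ring⟩
  simp [h, hodd.neg_one_pow, sub_eq_neg_add]

def tridiag (a b c : ℕ → R) (n : ℕ) : Matrix (Fin n) (Fin n) R :=
  of fun i j => a i * (if i = j then 1 else 0)
    + b i * (if (j : ℕ) = i + 1 then 1 else 0)
    + c i * (if (i : ℕ) = j + 1 then 1 else 0)

theorem tridiag_submatrix_castSucc (a b c : ℕ → R) (n : ℕ) :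
    (tridiag a b c (n + 1)).submatrix Fin.castSucc Fin.castSucc = tridiag a b c n := by
  ext i j
  simp [tridiag, Fin.ext_iff]

theorem det_tridiag_succ_succ (a b c : ℕ → R) (n : ℕ) :
    (tridiag a b c (n + 2)).det
      = a (n + 1) * (tridiag a b c (n + 1)).det - c (n + 1) * b n * (tridiag a b c n).det := by
  set T := tridiag a b c (n + 2)
  have hminor : (T.submatrix Fin.castSucc (Fin.last n).castSucc.succAbove).det
      = b n * (tridiag a b c n).det := by
    rw [det_succ_of_col_last_eq_zero]
    · have hinner : ((T.submatrix Fin.castSucc (Fin.last n).castSucc.succAbove).submatrix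
          Fin.castSucc Fin.castSucc) = tridiag a b c n := by
        ext i j
        simp [T, tridiag, Fin.succAbove_castSucc_of_lt _ _ j.castSucc_lt_last, Fin.ext_iff]
      rw [hinner]
      congr 1
      simp [T, tridiag, Fin.ext_iff]
      omega
    · intro i
      have := i.isLt
      simp [T, tridiag, Fin.ext_iff]
      split_ifs <;> first | omega | simp
  have hdiag : T (Fin.last _) (Fin.last _) = a (n + 1) := by simp [T, tridiag]
  have hsub : T (Fin.last _) (Fin.last n).castSucc = c (n + 1) := by
    simp [T, tridiag, Fin.ext_iff]
    omega
  rw [det_succ_succ_of_row_last_eq_zero T, hminor, tridiag_submatrix_castSucc, hdiag, hsub]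
  · ring
  · intro j
    have := j.isLt
    simp [T, tridiag, Fin.ext_iff]
    split_ifs <;> first | omega | simp

theorem eq_prod_mul_det_tridiag_of_recurrence (a b c r f : ℕ → R) (N : ℕ) (h0 : f 0 = 1)
    (h1 : f 1 = r 0 * a 0)
    (hrec : ∀ s, s + 2 ≤ N →
      f (s + 2) = r (s + 1) * a (s + 1) * f (s + 1) - r (s + 1) * r s * c (s + 1) * b s * f s) :
    ∀ s ≤ N, f s = (∏ j ∈ range s, r j) * (tridiag a b c s).det := by
  intro s
  induction s using Nat.strong_induction_on with
  | _ s ih =>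
    match s with
    | 0 => simp [h0]
    | 1 => simp [h1, tridiag]
    | s + 2 =>
      intro hs
      rw [hrec s hs, ih (s + 1) (by omega) (by omega), ih s (by omega) (by omega),
        det_tridiag_succ_succ, prod_range_succ _ (s + 1), prod_range_succ _ s]
      ring

end Matrix

section Elliptic

variable (τ η : ℂ)

theorem theta1_neg (x : ℂ) : theta1 τ (-x) = -theta1 τ x := by
  unfold theta1
  rw [← tsum_neg, ← (Equiv.neg ℤ).trans (Equiv.addRight (-1)) |>.tsum_eq]
  refine tsum_congr fun k => ?_
  simp only [Equiv.trans_apply, Equiv.neg_apply, Equiv.coe_addRight]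
  -- the reindexing `k ↦ -k - 1` changes the exponent by `2πi(-k-1) + πi`
  have hexp : (Real.pi : ℂ) * I * τ * (((-k + -1 : ℤ) : ℂ) + 1/2)^2 +
      2 * (Real.pi : ℂ) * I * (-x + 1/2) * (((-k + -1 : ℤ) : ℂ) + 1/2)
      = ((Real.pi : ℂ) * I * τ * ((k : ℂ) + 1/2)^2 +
        2 * (Real.pi : ℂ) * I * (x + 1/2) * ((k : ℂ) + 1/2))
        + ((-k - 1 : ℤ) : ℂ) * (2 * (Real.pi : ℂ) * I) + (Real.pi : ℂ) * I := by
    push_cast; ring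
  rw [hexp, exp_add, exp_add, exp_int_mul_two_pi_mul_I, exp_pi_mul_I]
  ring

theorem theta1_two_mul_eq_en {x : ℂ} {z : ℤ} (h : x = z) : theta1 τ (2 * x * η) = en τ η z := by
  rw [h, en]

theorem efact_succ (n : ℕ) : efact τ η (n + 1) = efact τ η n * en τ η ((n : ℤ) + 1) :=
  prod_range_succ _ _

theorem efact_eq_mul_prod {n s : ℕ} (hs : s ≤ n) :
    efact τ η n = efact τ η (n - s) * ∏ j ∈ range s, en τ η ((n : ℤ) - j) := by
  induction s with
  | zero => simp
  | succ s ih =>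
    obtain ⟨m, hm⟩ : ∃ m, n - s = m + 1 := ⟨n - s - 1, by omega⟩
    rw [ih (by omega), hm, efact_succ, prod_range_succ, show n - (s + 1) = m by omega,
      show (m : ℤ) + 1 = n - s by omega, mul_assoc, mul_comm (en τ η _)]

theorem efact_ne_zero {n : ℕ} (h : ∀ k : ℕ, 1 ≤ k → k ≤ n → en τ η k ≠ 0) :
    efact τ η n ≠ 0 :=
  prod_ne_zero_iff.mpr fun j hj => by
    have := mem_range.mp hj
    exact_mod_cast h (j + 1) (by omega) (by omega)

theorem ebinom_eq_prod_div {n s : ℕ} (hs : s ≤ n) (h : efact τ η (n - s) ≠ 0) :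
    ebinom τ η n s = (∏ j ∈ range s, en τ η ((n : ℤ) - j)) / efact τ η s := by
  rw [ebinom, efact_eq_mul_prod τ η hs, mul_comm (efact τ η s), mul_div_mul_left _ _ h]

theorem ebinom_div_ebinom {n m s : ℕ} (hsn : s ≤ n) (hnm : n ≤ m)
    (h : ∀ k : ℕ, 1 ≤ k → k ≤ m → en τ η k ≠ 0) :
    ebinom τ η n s / ebinom τ η m s
      = ∏ j ∈ range s, en τ η ((n : ℤ) - j) / en τ η ((m : ℤ) - j) := by
  have hfact : ∀ k ≤ m, efact τ η k ≠ 0 := fun k hk =>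
    efact_ne_zero τ η fun i hi hik => h i hi (hik.trans hk)
  rw [ebinom_eq_prod_div τ η hsn (hfact _ (by omega)),
    ebinom_eq_prod_div τ η (hsn.trans hnm) (hfact _ (by omega)),
    div_div_div_cancel_right₀ (hfact s (by omega)), prod_div_distrib]

theorem Apoly_eq_prod_mul_det_tridiag (E : ℂ) (ℓ : ℕ)
    (h : ∀ k : ℕ, 1 ≤ k → k ≤ 2 * ℓ → en τ η k ≠ 0) {s : ℕ} (hs : s ≤ ℓ) :
    Apoly τ η ℓ E s
      = (∏ j ∈ range s, en τ η ((ℓ : ℤ) - j) / en τ η (((2 * ℓ : ℕ) : ℤ) - j)) *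
        (Matrix.tridiag (fun _ => E)
          (fun k => theta1 τ (-2 * ((k : ℂ) + 1) * η) / theta1 τ (2 * ((ℓ : ℂ) - k) * η))
          (fun k => theta1 τ (2 * (2 * (ℓ : ℂ) + 1 - k) * η) / theta1 τ (2 * ((ℓ : ℂ) - k) * η))
          s).det := by
  refine Matrix.eq_prod_mul_det_tridiag_of_recurrence _ _ _ _ _ ℓ rfl (by simp [Apoly]) ?_ s hs
  intro s hs
  have hen : ∀ k : ℤ, 1 ≤ k → k ≤ 2 * ℓ → en τ η k ≠ 0 := by
    intro k hk1 hk2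
    lift k to ℕ using by omega
    exact h k (by omega) (by omega)
  have hsup : theta1 τ (-2 * ((s : ℂ) + 1) * η) / theta1 τ (2 * ((ℓ : ℂ) - s) * η)
      = -en τ η (s + 1) / en τ η (ℓ - s) := by
    rw [neg_mul, neg_mul, theta1_neg, theta1_two_mul_eq_en τ η (z := s + 1) (by push_cast; ring),
      theta1_two_mul_eq_en τ η (z := ℓ - s) (by push_cast; ring)]
  have hsub : theta1 τ (2 * (2 * (ℓ : ℂ) + 1 - ((s + 1 : ℕ) : ℂ)) * η)
        / theta1 τ (2 * ((ℓ : ℂ) - ((s + 1 : ℕ) : ℂ)) * η)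
      = en τ η (2 * ℓ - s) / en τ η (ℓ - (s + 1)) := by
    rw [theta1_two_mul_eq_en τ η (z := 2 * ℓ - s) (by push_cast; ring),
      theta1_two_mul_eq_en τ η (z := ℓ - (s + 1)) (by push_cast; ring)]
  simp only [Apoly]
  rw [hsup, hsub]
  have := hen (ℓ - s) (by omega) (by omega)
  have := hen (ℓ - (s + 1)) (by omega) (by omega)
  have := hen (2 * ℓ - s) (by omega) (by omega)
  have := hen (2 * ℓ - (s + 1)) (by omega) (by omega)
  push_cast
  field_simp
  ring

end Elliptic

theorem Apoly_determinant_formula_general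
    (τ : ℂ) (ℓ : ℕ) (η : ℂ)
    (hη : ∀ n : ℕ, 1 ≤ n → n ≤ 2*ℓ → theta1 τ (2*(n : ℂ)*η) ≠ 0)
    (s : ℕ) (hs : s ≤ ℓ) (E : ℂ) :
    Apoly τ η ℓ E s
      = ebinom τ η ℓ s / ebinom τ η (2*ℓ) s *
        Matrix.det (Matrix.of fun i j : Fin s =>
          E * (if i = j then 1 else 0)
          + theta1 τ (-2*(((i : ℕ) : ℂ) + 1)*η) / theta1 τ (2*((ℓ : ℂ) - ((i : ℕ) : ℂ))*η)
              * (if (j : ℕ) = (i : ℕ) + 1 then 1 else 0)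
          + theta1 τ (2*(2*(ℓ : ℂ) + 1 - ((i : ℕ) : ℂ))*η)
              / theta1 τ (2*((ℓ : ℂ) - ((i : ℕ) : ℂ))*η)
              * (if (i : ℕ) = (j : ℕ) + 1 then 1 else 0)) := by
  have hen : ∀ k : ℕ, 1 ≤ k → k ≤ 2 * ℓ → en τ η k ≠ 0 := fun k hk1 hk2 => by
    simpa [en] using hη k hk1 hk2
  rw [ebinom_div_ebinom τ η hs (by omega) hen, Apoly_eq_prod_mul_det_tridiag τ η E ℓ hen hs]
  rfl

/-- the tridiagonal determinant representation of A_{(ℓ−s)η}(E). -/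
theorem Apoly_determinant_formula
    (τ : ℂ) (hτ : 0 < τ.im) (ℓ : ℕ) (hℓ : 0 < ℓ) (η : ℂ)
    (hη : ∀ n : ℕ, 1 ≤ n → n ≤ 2*ℓ → theta1 τ (2*(n : ℂ)*η) ≠ 0)
    (s : ℕ) (hs : s ≤ ℓ) (E : ℂ) :
    Apoly τ η ℓ E s
      = ebinom τ η ℓ s / ebinom τ η (2*ℓ) s *
        Matrix.det (Matrix.of fun i j : Fin s =>
          E * (if i = j then 1 else 0)
          + theta1 τ (-2*(((i : ℕ) : ℂ) + 1)*η) / theta1 τ (2*((ℓ : ℂ) - ((i : ℕ) : ℂ))*η)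
              * (if (j : ℕ) = (i : ℕ) + 1 then 1 else 0)
          + theta1 τ (2*(2*(ℓ : ℂ) + 1 - ((i : ℕ) : ℂ))*η)
              / theta1 τ (2*((ℓ : ℂ) - ((i : ℕ) : ℂ))*η)
              * (if (i : ℕ) = (j : ℕ) + 1 then 1 else 0)) :=
  Apoly_determinant_formula_general τ ℓ η hη s hs E
end

section
/- Let ℓ be a positive integer, τ ∈ ℂ with Im τ > 0, η ∈ ℂ, and E ∈ ℂ. Then the (2ℓ+1)×(2ℓ+1) determinant det( δ_{ij}·E·θ1(2(ℓ+1−i)η) + δ_{i,j−1}·θ1(2(2ℓ+1−i)η) + δ_{i,j+1}·θ1(−2(i−1)η) )_{1≤i,j≤2ℓ+1} equals 0. -/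
open Complex Finset

/-!
Since θ₁ is odd, reversing the order of both rows and columns (i ↦ 2ℓ - i) negates the matrix.
A permutation similarity does not change the determinant, so det M = det (-M) = -det M in odd
dimension 2ℓ + 1, whence det M = 0.
-/

theorem theta1_odd (τ : ℂ) : Function.Odd (theta1 τ) := by
  intro x
  unfold theta1
  -- Reindexing by `k ↦ -k - 1` fixes `(k + 1/2)²` and turns `x + 1/2` into `x - 1/2`,
  -- which multiplies each term by `exp(-2πi(k + 1/2)) = -1`.
  rw [← tsum_neg, ← ((Equiv.addRight (1 : ℤ)).trans (Equiv.neg ℤ)).tsum_eq]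
  congr 1
  funext k
  simp only [Equiv.trans_apply, Equiv.coe_addRight, Equiv.neg_apply]
  have hexponent : (Real.pi : ℂ) * I * τ * (((-(k + 1) : ℤ) : ℂ) + 1 / 2) ^ 2 +
      2 * (Real.pi : ℂ) * I * (-x + 1 / 2) * (((-(k + 1) : ℤ) : ℂ) + 1 / 2)
      = ((Real.pi : ℂ) * I * τ * ((k : ℂ) + 1 / 2) ^ 2 +
        2 * (Real.pi : ℂ) * I * (x + 1 / 2) * ((k : ℂ) + 1 / 2))
        + ((-k : ℤ) * (2 * (Real.pi : ℂ) * I)) + -((Real.pi : ℂ) * I) := by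
    push_cast; ring
  rw [hexponent, exp_add, exp_add, exp_int_mul_two_pi_mul_I, exp_neg, exp_pi_mul_I]
  ring

theorem Matrix.det_eq_zero_of_submatrix_perm_eq_neg {n R : Type*} [Fintype n] [DecidableEq n]
    [CommRing R] [IsAddTorsionFree R] {A : Matrix n n R} (σ : Equiv.Perm n)
    (hA : A.submatrix σ σ = -A) (hn : Odd (Fintype.card n)) : A.det = 0 := by
  have hdet : A.det = -A.det := calc
    A.det = (A.submatrix σ σ).det := (Matrix.det_submatrix_equiv_self σ A).symm
    _ = (-A).det := by rw [hA]
    _ = -A.det := by rw [Matrix.det_neg, hn.neg_one_pow, neg_one_mul]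
  exact self_eq_neg.mp hdet

def tridiagTransferMatrix {R : Type*} [CommRing R] (f : R → R) (ℓ : ℕ) (η E : R) :
    Matrix (Fin (2 * ℓ + 1)) (Fin (2 * ℓ + 1)) R :=
  Matrix.of fun i j =>
    (if i = j then E * f (2 * ((ℓ : R) - ((i : ℕ) : R)) * η) else 0)
    + (if (j : ℕ) = (i : ℕ) + 1 then f (2 * (2 * (ℓ : R) - ((i : ℕ) : R)) * η) else 0)
    + (if (i : ℕ) = (j : ℕ) + 1 then f (-2 * ((i : ℕ) : R) * η) else 0)

theorem tridiagTransferMatrix_submatrix_rev {R : Type*} [CommRing R] {f : R → R}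
    (hf : Function.Odd f) (ℓ : ℕ) (η E : R) :
    (tridiagTransferMatrix f ℓ η E).submatrix Fin.rev Fin.rev = -tridiagTransferMatrix f ℓ η E := by
  ext i j
  have hrev : ∀ k : Fin (2 * ℓ + 1), (k.rev : ℕ) + k = 2 * ℓ := fun k => by
    rw [Fin.val_rev]; omega
  have hrev_cast : ((i.rev : ℕ) : R) = 2 * ℓ - (i : ℕ) := by
    rw [eq_sub_iff_add_eq]
    simpa using congrArg (Nat.cast : ℕ → R) (hrev i)
  have hsuper : (j.rev : ℕ) = i.rev + 1 ↔ (i : ℕ) = j + 1 := by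
    have := hrev i; have := hrev j; omega
  have hsub : (i.rev : ℕ) = j.rev + 1 ↔ (j : ℕ) = i + 1 := by
    have := hrev i; have := hrev j; omega
  simp only [tridiagTransferMatrix, Matrix.submatrix_apply, Matrix.neg_apply, Matrix.of_apply,
    Fin.rev_inj, hsuper, hsub, hrev_cast]
  have hodd : ∀ a b, a = -b → f a = -f b := by rintro a b rfl; exact hf b
  set x : R := ((i : ℕ) : R)
  rw [hodd (2 * (ℓ - (2 * ℓ - x)) * η) (2 * (ℓ - x) * η) (by ring),
    hodd (2 * (2 * ℓ - (2 * ℓ - x)) * η) (-2 * x * η) (by ring),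
    hodd (-2 * (2 * ℓ - x) * η) (2 * (2 * ℓ - x) * η) (by ring)]
  split_ifs <;> ring

theorem transfer_matrix_determinant_vanishes_general
    (τ : ℂ) (ℓ : ℕ) (η E : ℂ) :
    Matrix.det (Matrix.of fun i j : Fin (2*ℓ + 1) =>
        (if i = j then E * theta1 τ (2*((ℓ : ℂ) - ((i : ℕ) : ℂ))*η) else 0)
        + (if (j : ℕ) = (i : ℕ) + 1 then theta1 τ (2*(2*(ℓ : ℂ) - ((i : ℕ) : ℂ))*η) else 0)
        + (if (i : ℕ) = (j : ℕ) + 1 then theta1 τ (-2*((i : ℕ) : ℂ)*η) else 0)) = 0 :=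
  Matrix.det_eq_zero_of_submatrix_perm_eq_neg Fin.revPerm
    (tridiagTransferMatrix_submatrix_rev (theta1_odd τ) ℓ η E) (by simp)

/-- the (2ℓ+1)×(2ℓ+1) tridiagonal theta-determinant vanishes;
this expresses the holomorphy of T_{2ℓ+1}(u,E) at u = 0. -/
theorem transfer_matrix_determinant_vanishes
    (τ : ℂ) (hτ : 0 < τ.im) (ℓ : ℕ) (hℓ : 0 < ℓ) (η E : ℂ) :
    Matrix.det (Matrix.of fun i j : Fin (2*ℓ + 1) =>
        (if i = j then E * theta1 τ (2*((ℓ : ℂ) - ((i : ℕ) : ℂ))*η) else 0)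
        + (if (j : ℕ) = (i : ℕ) + 1 then theta1 τ (2*(2*(ℓ : ℂ) - ((i : ℕ) : ℂ))*η) else 0)
        + (if (i : ℕ) = (j : ℕ) + 1 then theta1 τ (-2*((i : ℕ) : ℂ)*η) else 0)) = 0 :=
  transfer_matrix_determinant_vanishes_general τ ℓ η E
end
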